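/- Cut admissibility for MacLL: if Δ ⇒ A and Γ[A] ⇒ C are derivable in cut-free MacLL, then Γ[Δ] ⇒ C is derivable in cut-free MacLL. -/

import Mathlib

/-- Multiplicative exponential formulas: variables, unit, !, ⊗, →, ←. -/
inductive Fm : Type where
  | var : Nat → Fm
  | one : Fm
  | bang : Fm → Fm
  | tens : Fm → Fm → Fm
  | arr : Fm → Fm → Fm      -- A → B
  | larr : Fm → Fm → Fm     -- B ← A
deriving DecidableEq

/-- Structures: binary trees of formulas, allowing the empty structure. -/
inductive Str : Type where
  | emp : Str
  | leaf : Fm → Str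
  | comma : Str → Str → Str
deriving DecidableEq

/-- One-hole structure contexts. -/
inductive Ctx : Type where
  | hole : Ctx
  | commaL : Ctx → Str → Ctx
  | commaR : Str → Ctx → Ctx

/-- Plug a structure into the hole of a context. -/
def Ctx.fill : Ctx → Str → Str
  | .hole, Δ => Δ
  | .commaL c Δ, P => .comma (c.fill P) Δ
  | .commaR Γ c, P => .comma Γ (c.fill P)

/-- !Γ : bang every leaf formula of a structure. -/
def bangStr : Str → Str
  | .emp => .emp
  | .leaf A => .leaf (.bang A)
  | .comma a b => .comma (bangStr a) (bangStr b)

/-- `StarBang Γ Γ'` : Γ' is Γ with some subset of its leaf formulas banged (!*Γ). -/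
inductive StarBang : Str → Str → Prop where
  | emp : StarBang .emp .emp
  | leaf (A : Fm) : StarBang (.leaf A) (.leaf A)
  | leafBang (A : Fm) : StarBang (.leaf A) (.leaf (.bang A))
  | comma {a a' b b' : Str} : StarBang a a' → StarBang b b' →
      StarBang (.comma a b) (.comma a' b')

/-- Proper structures: nonempty binary trees of formulas (no occurrence of the
empty structure), matching the grammar Γ ::= (Γ,Γ) | F. -/
inductive Str.proper : Str → Prop where
  | leaf (A : Fm) : (Str.leaf A).proper
  | comma {a b : Str} : a.proper → b.proper → (Str.comma a b).proper

/-- Flags selecting the optional modal/structural rules of a system. -/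
structure Flags where
  bangL : Bool := false
  bangR : Bool := false
  bangRK : Bool := false
  bangR4 : Bool := false
  bangRK4 : Bool := false
  contr : Bool := false     -- single-formula contraction C
  contrK : Bool := false    -- structural contraction CK
  weak : Bool := false      -- weakening W
  cut : Bool := false

/-- Sequent derivability in MacLL extended by the rules selected by `fl`,
with nonlogical axioms `Ax`. -/
inductive Der (fl : Flags) (Ax : Set (Str × Fm)) : Str → Fm → Prop where
  | ax {Γ : Str} {C : Fm} : (Γ, C) ∈ Ax → Der fl Ax Γ C
  | init (A : Fm) : Der fl Ax (.leaf A) A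
  | tensL (Γ : Ctx) {A B C : Fm} :
      Der fl Ax (Γ.fill (.comma (.leaf A) (.leaf B))) C →
      Der fl Ax (Γ.fill (.leaf (.tens A B))) C
  | tensR {Γ Δ : Str} {A B : Fm} :
      Der fl Ax Γ A → Der fl Ax Δ B → Der fl Ax (.comma Γ Δ) (.tens A B)
  | arrL (Γ : Ctx) {Δ : Str} {A B C : Fm} :
      Der fl Ax Δ A → Der fl Ax (Γ.fill (.leaf B)) C →
      Der fl Ax (Γ.fill (.comma Δ (.leaf (.arr A B)))) C
  | arrR {Γ : Str} {A B : Fm} :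
      Der fl Ax (.comma (.leaf A) Γ) B → Der fl Ax Γ (.arr A B)
  | larrL (Γ : Ctx) {Δ : Str} {A B C : Fm} :
      Der fl Ax Δ A → Der fl Ax (Γ.fill (.leaf B)) C →
      Der fl Ax (Γ.fill (.comma (.leaf (.larr B A)) Δ)) C
  | larrR {Γ : Str} {A B : Fm} :
      Der fl Ax (.comma Γ (.leaf A)) B → Der fl Ax Γ (.larr B A)
  | oneL (Γ : Ctx) {C : Fm} :
      Der fl Ax (Γ.fill .emp) C → Der fl Ax (Γ.fill (.leaf .one)) C
  | oneR : Der fl Ax .emp .one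
  | bangL (Γ : Ctx) {A C : Fm} : fl.bangL = true →
      Der fl Ax (Γ.fill (.leaf A)) C → Der fl Ax (Γ.fill (.leaf (.bang A))) C
  | bangR {A C : Fm} : fl.bangR = true →
      Der fl Ax (.leaf A) C → Der fl Ax (.leaf (.bang A)) (.bang C)
  | bangRK {Γ : Str} {C : Fm} : fl.bangRK = true →
      Der fl Ax Γ C → Der fl Ax (bangStr Γ) (.bang C)
  | bangR4 {A C : Fm} : fl.bangR4 = true →
      Der fl Ax (.leaf (.bang A)) C → Der fl Ax (.leaf (.bang A)) (.bang C)
  | bangRK4 {Γ Γ' : Str} {C : Fm} : fl.bangRK4 = true →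
      StarBang Γ Γ' → Der fl Ax Γ' C → Der fl Ax (bangStr Γ) (.bang C)
  | contr (Γ : Ctx) {A : Fm} {C : Fm} : fl.contr = true →
      Der fl Ax (Γ.fill (.comma (.leaf (.bang A)) (.leaf (.bang A)))) C →
      Der fl Ax (Γ.fill (.leaf (.bang A))) C
  | contrK (Γ : Ctx) {Δ : Str} {C : Fm} : fl.contrK = true → Δ.proper →
      Der fl Ax (Γ.fill (.comma (bangStr Δ) (bangStr Δ))) C →
      Der fl Ax (Γ.fill (bangStr Δ)) C
  | weak (Γ : Ctx) {A C : Fm} : fl.weak = true →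
      Der fl Ax (Γ.fill .emp) C → Der fl Ax (Γ.fill (.leaf (.bang A))) C
  | cut (Γ : Ctx) {Δ : Str} {A C : Fm} : fl.cut = true →
      Der fl Ax Δ A → Der fl Ax (Γ.fill (.leaf A)) C →
      Der fl Ax (Γ.fill Δ) C

/-- Plain MacLL (no modal or structural rules, no cut). -/
def macll : Flags := {}

namespace CutAux

/-- Height-indexed cut-free MacLL derivations. -/
inductive DerN : Nat → Str → Fm → Prop where
  | init (A : Fm) : DerN 0 (.leaf A) A
  | tensL (Γ : Ctx) {n : Nat} {A B C : Fm} :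
      DerN n (Γ.fill (.comma (.leaf A) (.leaf B))) C →
      DerN (n+1) (Γ.fill (.leaf (.tens A B))) C
  | tensR {m k : Nat} {Γ Δ : Str} {A B : Fm} :
      DerN m Γ A → DerN k Δ B → DerN (m ⊔ k + 1) (.comma Γ Δ) (.tens A B)
  | arrL (Γ : Ctx) {m k : Nat} {Δ : Str} {A B C : Fm} :
      DerN m Δ A → DerN k (Γ.fill (.leaf B)) C →
      DerN (m ⊔ k + 1) (Γ.fill (.comma Δ (.leaf (.arr A B)))) C
  | arrR {n : Nat} {Γ : Str} {A B : Fm} :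
      DerN n (.comma (.leaf A) Γ) B → DerN (n+1) Γ (.arr A B)
  | larrL (Γ : Ctx) {m k : Nat} {Δ : Str} {A B C : Fm} :
      DerN m Δ A → DerN k (Γ.fill (.leaf B)) C →
      DerN (m ⊔ k + 1) (Γ.fill (.comma (.leaf (.larr B A)) Δ)) C
  | larrR {n : Nat} {Γ : Str} {A B : Fm} :
      DerN n (.comma Γ (.leaf A)) B → DerN (n+1) Γ (.larr B A)
  | oneL (Γ : Ctx) {n : Nat} {C : Fm} :
      DerN n (Γ.fill .emp) C → DerN (n+1) (Γ.fill (.leaf .one)) C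
  | oneR : DerN 0 .emp .one

theorem der_iff (Γ : Str) (C : Fm) : Der macll ∅ Γ C ↔ ∃ n, DerN n Γ C := by
  constructor
  · intro h
    induction h with
    | ax h => exact absurd h (Set.notMem_empty _)
    | init A => exact ⟨0, .init A⟩
    | tensL Γ _ ih => obtain ⟨n, d⟩ := ih; exact ⟨n+1, .tensL Γ d⟩
    | tensR _ _ ih1 ih2 =>
        obtain ⟨m, d1⟩ := ih1; obtain ⟨k, d2⟩ := ih2; exact ⟨_, .tensR d1 d2⟩
    | arrL Γ _ _ ih1 ih2 =>
        obtain ⟨m, d1⟩ := ih1; obtain ⟨k, d2⟩ := ih2; exact ⟨_, .arrL Γ d1 d2⟩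
    | arrR _ ih => obtain ⟨n, d⟩ := ih; exact ⟨n+1, .arrR d⟩
    | larrL Γ _ _ ih1 ih2 =>
        obtain ⟨m, d1⟩ := ih1; obtain ⟨k, d2⟩ := ih2; exact ⟨_, .larrL Γ d1 d2⟩
    | larrR _ ih => obtain ⟨n, d⟩ := ih; exact ⟨n+1, .larrR d⟩
    | oneL Γ _ ih => obtain ⟨n, d⟩ := ih; exact ⟨n+1, .oneL Γ d⟩
    | oneR => exact ⟨0, .oneR⟩
    | bangL _ hfl => exact absurd hfl (by decide)
    | bangR hfl => exact absurd hfl (by decide)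
    | bangRK hfl => exact absurd hfl (by decide)
    | bangR4 hfl => exact absurd hfl (by decide)
    | bangRK4 hfl => exact absurd hfl (by decide)
    | contr _ hfl => exact absurd hfl (by decide)
    | contrK _ hfl => exact absurd hfl (by decide)
    | weak _ hfl => exact absurd hfl (by decide)
    | cut _ hfl => exact absurd hfl (by decide)
  · rintro ⟨n, d⟩
    induction d with
    | init A => exact .init A
    | tensL Γ _ ih => exact .tensL Γ ih
    | tensR _ _ ih1 ih2 => exact .tensR ih1 ih2
    | arrL Γ _ _ ih1 ih2 => exact .arrL Γ ih1 ih2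
    | arrR _ ih => exact .arrR ih
    | larrL Γ _ _ ih1 ih2 => exact .larrL Γ ih1 ih2
    | larrR _ ih => exact .larrR ih
    | oneL Γ _ ih => exact .oneL Γ ih
    | oneR => exact .oneR

/-- Context composition. -/
def _root_.Ctx.comp : Ctx → Ctx → Ctx
  | .hole, d => d
  | .commaL c s, d => .commaL (c.comp d) s
  | .commaR s c, d => .commaR s (c.comp d)

@[simp] theorem fill_comp (c d : Ctx) (s : Str) :
    (c.comp d).fill s = c.fill (d.fill s) := by
  induction c with
  | hole => rfl
  | commaL c t ih => simp [Ctx.comp, Ctx.fill, ih]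
  | commaR t c ih => simp [Ctx.comp, Ctx.fill, ih]

theorem fill_eq_leaf {c : Ctx} {s : Str} {B : Fm} (h : c.fill s = .leaf B) :
    c = .hole ∧ s = .leaf B := by
  cases c with
  | hole => exact ⟨rfl, h⟩
  | commaL c t => simp [Ctx.fill] at h
  | commaR t c => simp [Ctx.fill] at h

theorem fill_eq_emp {c : Ctx} {s : Str} (h : c.fill s = .emp) :
    c = .hole ∧ s = .emp := by
  cases c with
  | hole => exact ⟨rfl, h⟩
  | commaL c t => simp [Ctx.fill] at h
  | commaR t c => simp [Ctx.fill] at h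

theorem fill_eq_comma {c : Ctx} {s u v : Str} (h : c.fill s = .comma u v) :
    (c = .hole ∧ s = .comma u v) ∨
    (∃ c', c = .commaL c' v ∧ c'.fill s = u) ∨
    (∃ c', c = .commaR u c' ∧ c'.fill s = v) := by
  cases c with
  | hole => exact .inl ⟨rfl, h⟩
  | commaL c t =>
      simp only [Ctx.fill, Str.comma.injEq] at h
      exact .inr (.inl ⟨c, by rw [h.2], h.1⟩)
  | commaR t c =>
      simp only [Ctx.fill, Str.comma.injEq] at h
      exact .inr (.inr ⟨c, by rw [h.1], h.2⟩)

theorem decomp (c1 c2 : Ctx) (A : Fm) (t : Str)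
    (h : c1.fill (.leaf A) = c2.fill t) :
    (∃ d : Ctx, c1 = c2.comp d ∧ t = d.fill (.leaf A)) ∨
    (∃ e l r : Ctx, c1 = e.comp (.commaL l (r.fill t)) ∧
        c2 = e.comp (.commaR (l.fill (.leaf A)) r)) ∨
    (∃ e l r : Ctx, c1 = e.comp (.commaR (l.fill t) r) ∧
        c2 = e.comp (.commaL l (r.fill (.leaf A)))) := by
  induction c1 generalizing c2 with
  | hole =>
      obtain ⟨rfl, rfl⟩ := fill_eq_leaf h.symm
      exact .inl ⟨.hole, rfl, rfl⟩
  | commaL c s ih =>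
      cases c2 with
      | hole => exact .inl ⟨.commaL c s, rfl, h.symm⟩
      | commaL c' s' =>
          simp only [Ctx.fill, Str.comma.injEq] at h
          obtain ⟨h1, rfl⟩ := h
          rcases ih c' h1 with ⟨d, rfl, ht⟩ | ⟨e, l, r, rfl, rfl⟩ | ⟨e, l, r, rfl, rfl⟩
          · exact .inl ⟨d, rfl, ht⟩
          · exact .inr (.inl ⟨.commaL e s, l, r, rfl, rfl⟩)
          · exact .inr (.inr ⟨.commaL e s, l, r, rfl, rfl⟩)
      | commaR s' c' =>
          simp only [Ctx.fill, Str.comma.injEq] at h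
          obtain ⟨rfl, rfl⟩ := h
          exact .inr (.inl ⟨.hole, c, c', rfl, rfl⟩)
  | commaR s c ih =>
      cases c2 with
      | hole => exact .inl ⟨.commaR s c, rfl, h.symm⟩
      | commaL c' s' =>
          simp only [Ctx.fill, Str.comma.injEq] at h
          obtain ⟨rfl, rfl⟩ := h
          exact .inr (.inr ⟨.hole, c', c, rfl, rfl⟩)
      | commaR s' c' =>
          simp only [Ctx.fill, Str.comma.injEq] at h
          obtain ⟨rfl, h2⟩ := h
          rcases ih c' h2 with ⟨d, rfl, ht⟩ | ⟨e, l, r, rfl, rfl⟩ | ⟨e, l, r, rfl, rfl⟩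
          · exact .inl ⟨d, rfl, ht⟩
          · exact .inr (.inl ⟨.commaR s e, l, r, rfl, rfl⟩)
          · exact .inr (.inr ⟨.commaR s e, l, r, rfl, rfl⟩)

end CutAux
namespace CutAux

/-- Formula size. -/
def fsz : Fm → Nat
  | .var _ => 1
  | .one => 1
  | .bang a => fsz a + 1
  | .tens a b => fsz a + fsz b + 1
  | .arr a b => fsz a + fsz b + 1
  | .larr a b => fsz a + fsz b + 1

/-- What must be provided to handle the principal cut case for formula `A`,
when the left premise's conclusion structure is `Δf`. -/
def PrinGoal (Δf : Str) : Fm → Ctx → Fm → Prop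
  | .tens x y, Γ₀, C =>
      (∃ k, DerN k (Γ₀.fill (.comma (.leaf x) (.leaf y))) C) →
      ∃ m, DerN m (Γ₀.fill Δf) C
  | .arr x y, Γ₀, C => ∀ Δ' : Str,
      (∃ ma, DerN ma Δ' x) → (∃ kb, DerN kb (Γ₀.fill (.leaf y)) C) →
      ∃ m, DerN m (Γ₀.fill (.comma Δ' Δf)) C
  | .larr y x, Γ₀, C => ∀ Δ' : Str,
      (∃ ma, DerN ma Δ' x) → (∃ kb, DerN kb (Γ₀.fill (.leaf y)) C) →
      ∃ m, DerN m (Γ₀.fill (.comma Δf Δ')) C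
  | .one, Γ₀, C =>
      (∃ k, DerN k (Γ₀.fill .emp) C) → ∃ m, DerN m (Γ₀.fill Δf) C
  | _, _, _ => True

theorem cutR : ∀ (n2 : Nat) (A : Fm) (Δf : Str) (Γ : Ctx) (C : Fm),
    (∀ (Γ₀ : Ctx) (C' : Fm), PrinGoal Δf A Γ₀ C') →
    (∃ m, DerN m Δf A) →
    DerN n2 (Γ.fill (.leaf A)) C → ∃ m, DerN m (Γ.fill Δf) C := by
  intro n2
  induction n2 using Nat.strong_induction_on with | _ n2 ih => ?_
  intro A Δf Γ C hp hid h2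
  generalize hG : Γ.fill (.leaf A) = S at h2
  cases h2 with
  | init A' =>
      obtain ⟨rfl, hA⟩ := fill_eq_leaf hG
      injection hA with hA; subst hA
      exact hid
  | @tensR m k Γ1 Γ2 x y q1 q2 =>
      rcases fill_eq_comma hG with ⟨_, hA⟩ | ⟨c', rfl, hc⟩ | ⟨c', rfl, hc⟩
      · exact absurd hA (by simp)
      · subst hc
        obtain ⟨m', r⟩ := ih m (by omega) A Δf c' x hp hid q1
        exact ⟨_, .tensR r q2⟩
      · subst hc
        obtain ⟨m', r⟩ := ih k (by omega) A Δf c' y hp hid q2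
        exact ⟨_, .tensR q1 r⟩
  | @arrR n' Γ' x y q =>
      subst hG
      obtain ⟨m', r⟩ := ih n' (by omega) A Δf (.commaR (.leaf x) Γ) y hp hid q
      exact ⟨_, .arrR r⟩
  | @larrR n' Γ' x y q =>
      subst hG
      obtain ⟨m', r⟩ := ih n' (by omega) A Δf (.commaL Γ (.leaf x)) y hp hid q
      exact ⟨_, .larrR r⟩
  | oneR =>
      obtain ⟨_, hA⟩ := fill_eq_emp hG
      exact absurd hA (by simp)
  | @tensL Γ₀ k x y C q =>
      rcases decomp Γ Γ₀ A _ hG with ⟨d, rfl, ht⟩ | ⟨e, l, r, rfl, rfl⟩ | ⟨e, l, r, rfl, rfl⟩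
      · obtain ⟨rfl, hA⟩ := fill_eq_leaf ht.symm
        injection hA with hA; subst hA
        obtain ⟨m', r⟩ := hp Γ₀ C ⟨k, q⟩
        exact ⟨m', by rw [fill_comp]; exact r⟩
      · have q' : DerN k ((e.comp (.commaL l (r.fill (.comma (.leaf x) (.leaf y))))).fill
            (.leaf A)) C := by rw [fill_comp] at q ⊢; exact q
        obtain ⟨m', w⟩ := ih k (by omega) A Δf _ C hp hid q'
        rw [fill_comp] at w
        have w2 := DerN.tensL (e.comp (.commaR (l.fill Δf) r))
          (by rw [fill_comp]; exact w)
        rw [fill_comp] at w2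
        exact ⟨_, by rw [fill_comp]; exact w2⟩
      · have q' : DerN k ((e.comp (.commaR (l.fill (.comma (.leaf x) (.leaf y))) r)).fill
            (.leaf A)) C := by rw [fill_comp] at q ⊢; exact q
        obtain ⟨m', w⟩ := ih k (by omega) A Δf _ C hp hid q'
        rw [fill_comp] at w
        have w2 := DerN.tensL (e.comp (.commaL l (r.fill Δf)))
          (by rw [fill_comp]; exact w)
        rw [fill_comp] at w2
        exact ⟨_, by rw [fill_comp]; exact w2⟩
  | @arrL Γ₀ ma kb Δ' x y C qa qb =>
      rcases decomp Γ Γ₀ A _ hG with ⟨d, rfl, ht⟩ | ⟨e, l, r, rfl, rfl⟩ | ⟨e, l, r, rfl, rfl⟩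
      · rcases fill_eq_comma ht.symm with ⟨_, hA⟩ | ⟨d', rfl, hd⟩ | ⟨d'', rfl, hd⟩
        · exact absurd hA (by simp)
        · subst hd
          obtain ⟨m', w⟩ := ih ma (by omega) A Δf d' x hp hid qa
          have w2 := DerN.arrL Γ₀ w qb
          exact ⟨_, by rw [fill_comp]; exact w2⟩
        · obtain ⟨rfl, hA⟩ := fill_eq_leaf hd
          injection hA with hA; subst hA
          obtain ⟨m', w⟩ := hp Γ₀ C Δ' ⟨ma, qa⟩ ⟨kb, qb⟩
          exact ⟨m', by rw [fill_comp]; exact w⟩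
      · have q' : DerN kb ((e.comp (.commaL l (r.fill (.leaf y)))).fill (.leaf A)) C := by
          rw [fill_comp] at qb ⊢; exact qb
        obtain ⟨m', w⟩ := ih kb (by omega) A Δf _ C hp hid q'
        rw [fill_comp] at w
        have w2 := DerN.arrL (e.comp (.commaR (l.fill Δf) r)) qa
          (by rw [fill_comp]; exact w)
        rw [fill_comp] at w2
        exact ⟨_, by rw [fill_comp]; exact w2⟩
      · have q' : DerN kb ((e.comp (.commaR (l.fill (.leaf y)) r)).fill (.leaf A)) C := by
          rw [fill_comp] at qb ⊢; exact qb
        obtain ⟨m', w⟩ := ih kb (by omega) A Δf _ C hp hid q'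
        rw [fill_comp] at w
        have w2 := DerN.arrL (e.comp (.commaL l (r.fill Δf))) qa
          (by rw [fill_comp]; exact w)
        rw [fill_comp] at w2
        exact ⟨_, by rw [fill_comp]; exact w2⟩
  | @larrL Γ₀ ma kb Δ' x y C qa qb =>
      rcases decomp Γ Γ₀ A _ hG with ⟨d, rfl, ht⟩ | ⟨e, l, r, rfl, rfl⟩ | ⟨e, l, r, rfl, rfl⟩
      · rcases fill_eq_comma ht.symm with ⟨_, hA⟩ | ⟨d', rfl, hd⟩ | ⟨d'', rfl, hd⟩
        · exact absurd hA (by simp)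
        · obtain ⟨rfl, hA⟩ := fill_eq_leaf hd
          injection hA with hA; subst hA
          obtain ⟨m', w⟩ := hp Γ₀ C Δ' ⟨ma, qa⟩ ⟨kb, qb⟩
          exact ⟨m', by rw [fill_comp]; exact w⟩
        · subst hd
          obtain ⟨m', w⟩ := ih ma (by omega) A Δf d'' x hp hid qa
          have w2 := DerN.larrL Γ₀ w qb
          exact ⟨_, by rw [fill_comp]; exact w2⟩
      · have q' : DerN kb ((e.comp (.commaL l (r.fill (.leaf y)))).fill (.leaf A)) C := by
          rw [fill_comp] at qb ⊢; exact qb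
        obtain ⟨m', w⟩ := ih kb (by omega) A Δf _ C hp hid q'
        rw [fill_comp] at w
        have w2 := DerN.larrL (e.comp (.commaR (l.fill Δf) r)) qa
          (by rw [fill_comp]; exact w)
        rw [fill_comp] at w2
        exact ⟨_, by rw [fill_comp]; exact w2⟩
      · have q' : DerN kb ((e.comp (.commaR (l.fill (.leaf y)) r)).fill (.leaf A)) C := by
          rw [fill_comp] at qb ⊢; exact qb
        obtain ⟨m', w⟩ := ih kb (by omega) A Δf _ C hp hid q'
        rw [fill_comp] at w
        have w2 := DerN.larrL (e.comp (.commaL l (r.fill Δf))) qa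
          (by rw [fill_comp]; exact w)
        rw [fill_comp] at w2
        exact ⟨_, by rw [fill_comp]; exact w2⟩
  | @oneL Γ₀ k C q =>
      rcases decomp Γ Γ₀ A _ hG with ⟨d, rfl, ht⟩ | ⟨e, l, r, rfl, rfl⟩ | ⟨e, l, r, rfl, rfl⟩
      · obtain ⟨rfl, hA⟩ := fill_eq_leaf ht.symm
        injection hA with hA; subst hA
        obtain ⟨m', r⟩ := hp Γ₀ C ⟨k, q⟩
        exact ⟨m', by rw [fill_comp]; exact r⟩
      · have q' : DerN k ((e.comp (.commaL l (r.fill .emp))).fill (.leaf A)) C := by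
          rw [fill_comp] at q ⊢; exact q
        obtain ⟨m', w⟩ := ih k (by omega) A Δf _ C hp hid q'
        rw [fill_comp] at w
        have w2 := DerN.oneL (e.comp (.commaR (l.fill Δf) r))
          (by rw [fill_comp]; exact w)
        rw [fill_comp] at w2
        exact ⟨_, by rw [fill_comp]; exact w2⟩
      · have q' : DerN k ((e.comp (.commaR (l.fill .emp) r)).fill (.leaf A)) C := by
          rw [fill_comp] at q ⊢; exact q
        obtain ⟨m', w⟩ := ih k (by omega) A Δf _ C hp hid q'
        rw [fill_comp] at w
        have w2 := DerN.oneL (e.comp (.commaL l (r.fill Δf)))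
          (by rw [fill_comp]; exact w)
        rw [fill_comp] at w2
        exact ⟨_, by rw [fill_comp]; exact w2⟩

end CutAux
namespace CutAux

theorem cutN : ∀ (sA n1 : Nat) (A : Fm) (Δ : Str) (Γ : Ctx) (C : Fm) (n2 : Nat),
    fsz A = sA → DerN n1 Δ A → DerN n2 (Γ.fill (.leaf A)) C →
    ∃ m, DerN m (Γ.fill Δ) C := by
  intro sA
  induction sA using Nat.strong_induction_on with | _ sA ihA => ?_
  intro n1
  induction n1 using Nat.strong_induction_on with | _ n1 ih1 => ?_
  intro A Δ Γ C n2 hsz h1 h2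
  cases h1 with
  | init A => exact ⟨n2, h2⟩
  | @tensL c j x y A q =>
      obtain ⟨m, r⟩ := ih1 j (by omega) A _ Γ C n2 hsz q h2
      have w := DerN.tensL (Γ.comp c) (by rw [fill_comp]; exact r)
      rw [fill_comp] at w
      exact ⟨_, w⟩
  | @arrL c ma kb Δ'' x y A qa qb =>
      obtain ⟨m, r⟩ := ih1 kb (by omega) A _ Γ C n2 hsz qb h2
      have w := DerN.arrL (Γ.comp c) qa (by rw [fill_comp]; exact r)
      rw [fill_comp] at w
      exact ⟨_, w⟩
  | @larrL c ma kb Δ'' x y A qa qb =>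
      obtain ⟨m, r⟩ := ih1 kb (by omega) A _ Γ C n2 hsz qb h2
      have w := DerN.larrL (Γ.comp c) qa (by rw [fill_comp]; exact r)
      rw [fill_comp] at w
      exact ⟨_, w⟩
  | @oneL c j A q =>
      obtain ⟨m, r⟩ := ih1 j (by omega) A _ Γ C n2 hsz q h2
      have w := DerN.oneL (Γ.comp c) (by rw [fill_comp]; exact r)
      rw [fill_comp] at w
      exact ⟨_, w⟩
  | @tensR m1 k1 Δ1 Δ2 a b p1 p2 =>
      refine cutR n2 (.tens a b) (.comma Δ1 Δ2) Γ C ?_ ⟨_, .tensR p1 p2⟩ h2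
      rintro Γ₀ C' ⟨k, q⟩
      have q' : DerN k ((Γ₀.comp (.commaL .hole (.leaf b))).fill (.leaf a)) C' := by
        rw [fill_comp]; exact q
      obtain ⟨m', r⟩ := ihA (fsz a) (by rw [← hsz]; simp [fsz]) m1 a Δ1 _ C' k rfl p1 q'
      rw [fill_comp] at r
      have r' : DerN m' ((Γ₀.comp (.commaR Δ1 .hole)).fill (.leaf b)) C' := by
        rw [fill_comp]; exact r
      obtain ⟨m'', r2⟩ := ihA (fsz b) (by rw [← hsz]; simp [fsz]) k1 b Δ2 _ C' m' rfl p2 r'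
      rw [fill_comp] at r2
      exact ⟨m'', r2⟩
  | @arrR j Δ a b p =>
      refine cutR n2 (.arr a b) Δ Γ C ?_ ⟨_, .arrR p⟩ h2
      rintro Γ₀ C' Δ' ⟨ma, qa⟩ ⟨kb, qb⟩
      obtain ⟨m', r⟩ := ihA (fsz b) (by rw [← hsz]; simp [fsz]) j b
        (.comma (.leaf a) Δ) Γ₀ C' kb rfl p qb
      have r' : DerN m' ((Γ₀.comp (.commaL .hole Δ)).fill (.leaf a)) C' := by
        rw [fill_comp]; exact r
      obtain ⟨m'', r2⟩ := ihA (fsz a) (by rw [← hsz]; simp [fsz]) ma a Δ' _ C' m' rfl qa r'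
      rw [fill_comp] at r2
      exact ⟨m'', r2⟩
  | @larrR j Δ a b p =>
      refine cutR n2 (.larr b a) Δ Γ C ?_ ⟨_, .larrR p⟩ h2
      rintro Γ₀ C' Δ' ⟨ma, qa⟩ ⟨kb, qb⟩
      obtain ⟨m', r⟩ := ihA (fsz b) (by rw [← hsz]; simp [fsz]) j b
        (.comma Δ (.leaf a)) Γ₀ C' kb rfl p qb
      have r' : DerN m' ((Γ₀.comp (.commaR Δ .hole)).fill (.leaf a)) C' := by
        rw [fill_comp]; exact r
      obtain ⟨m'', r2⟩ := ihA (fsz a) (by rw [← hsz]; simp [fsz]) ma a Δ' _ C' m' rfl qa r'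
      rw [fill_comp] at r2
      exact ⟨m'', r2⟩
  | oneR =>
      refine cutR n2 .one .emp Γ C ?_ ⟨0, .oneR⟩ h2
      rintro Γ₀ C' ⟨k, q⟩
      exact ⟨k, q⟩

end CutAux

/-- Cut admissibility for cut-free MacLL. -/
theorem stmt3 (Δ : Str) (A : Fm) (Γ : Ctx) (C : Fm)
    (h1 : Der macll ∅ Δ A) (h2 : Der macll ∅ (Γ.fill (.leaf A)) C) :
    Der macll ∅ (Γ.fill Δ) C := by
  obtain ⟨n1, d1⟩ := (CutAux.der_iff _ _).1 h1
  obtain ⟨n2, d2⟩ := (CutAux.der_iff _ _).1 h2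
  exact (CutAux.der_iff _ _).2 (CutAux.cutN _ n1 A Δ Γ C n2 rfl d1 d2)
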